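/- arXiv:1501.00740 — 4 statements merged into one kernel-verified Lean document; each statement's English description precedes it below -/
import Mathlib

section
/- For every integer m ≥ 0 and every complex number z with |z| < 1, one has ln^m(1−z)/(1−z) − ln^m(1+z)/(1+z) = 2·(−1)^m · m! · Σ_{k=0}^{∞} (|S₁(2k+2, m+1)| / (2k+1)!) · z^{2k+1}, where ln denotes the principal branch of the logarithm; the series converges absolutely for |z| < 1. -/
/-!
Write `a n m = |S₁(n,m)| / n!` and `P n = X (X + 1) ⋯ (X + n - 1)`. Differentiating
`P (n + 1) = P n * (X + n)` gives `P n' = ∑_{i+j=n} (n choose i) |S₁(j,1)| P i`, whose coefficients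
say that `(m + 1) a · (m + 1)` is the Cauchy product of `a · m` and `a · 1`. Since
`∑ a n 1 zⁿ = -ln(1-z)`, induction on `m` gives `∑ a n m zⁿ = (-ln(1-z))^m / m!`, absolutely
for `|z| < 1`. Multiplying by the geometric series and using `∑_{i ≤ n} a i m = |S₁(n+1,m+1)| / n!`
yields the Taylor series of `ln^m(1-z)/(1-z)`; the claimed identity is its odd part.
-/

open Finset Filter Real

/-- Unsigned Stirling numbers of the first kind `|S₁(n,l)|`: the coefficients in the
expansion of the rising factorial `z(z+1)⋯(z+n−1) = Σ_l |S₁(n,l)| z^l`. -/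
noncomputable def S1 (n l : ℕ) : ℕ := (ascPochhammer ℕ n).coeff l

open Polynomial

theorem coeff_ascPochhammer_nat (n k : ℕ) :
    (ascPochhammer ℕ n).coeff k = Nat.stirlingFirst n k := by
  induction n generalizing k with
  | zero => cases k <;> simp [coeff_one]
  | succ n ih =>
    cases k with
    | zero => simp [coeff_zero_eq_eval_zero]
    | succ k =>
      simp [ascPochhammer_succ_right, mul_add, ih, Nat.stirlingFirst_succ_succ, add_comm, mul_comm]

theorem derivative_ascPochhammer {S : Type*} [CommSemiring S] (n : ℕ) :
    derivative (ascPochhammer S n) =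
      ∑ ij ∈ antidiagonal n, (n.choose ij.1 : S[X]) *
        (Nat.stirlingFirst ij.2 1 * ascPochhammer S ij.1) := by
  induction n with
  | zero => simp
  | succ n ih =>
    have hstirling_zero : ∑ ij ∈ antidiagonal n,
        (n.choose ij.1 : S[X]) * (Nat.stirlingFirst ij.2 0 * ascPochhammer S ij.1) =
          ascPochhammer S n := by
      rw [sum_eq_single (n, 0) (fun ij hij hne => ?_) (by simp)]
      · simp
      obtain ⟨j, hj⟩ := Nat.exists_eq_succ_of_ne_zero (n := ij.2) (by aesop)
      simp [hj]
    rw [ascPochhammer_succ_right, derivative_mul, ih, derivative_add, derivative_X,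
      derivative_natCast, add_zero, mul_one, ← hstirling_zero, sum_mul, ← sum_add_distrib,
      sum_antidiagonal_choose_succ_mul (fun i j => (Nat.stirlingFirst j 1 : S[X]) *
        ascPochhammer S i), ← sum_add_distrib]
    refine sum_congr rfl fun ⟨i, j⟩ hij => ?_
    rw [HasAntidiagonal.mem_antidiagonal] at hij
    subst hij
    rw [← Nat.choose_symm_add]
    simp only [Nat.stirlingFirst_succ_succ, ascPochhammer_succ_right]
    push_cast
    ring

theorem stirlingFirst_convolution (n m : ℕ) :
    ∑ ij ∈ antidiagonal n, n.choose ij.1 * (Nat.stirlingFirst ij.2 1 * Nat.stirlingFirst ij.1 m) =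
      (m + 1) * Nat.stirlingFirst n (m + 1) := by
  have h := congrArg (coeff · m) (derivative_ascPochhammer (S := ℕ) n)
  simp only [coeff_derivative, finsetSum_coeff, coeff_natCast_mul, coeff_ascPochhammer_nat,
    Nat.cast_id] at h
  rw [← h, mul_comm]

section Field

variable {K : Type*} [Field K] [CharZero K]

theorem sum_antidiagonal_stirlingFirst_div_factorial (n m : ℕ) :
    ∑ ij ∈ antidiagonal n, (Nat.stirlingFirst ij.1 m / ij.1.factorial : K) *
        (Nat.stirlingFirst ij.2 1 / ij.2.factorial) =
      (m + 1) * (Nat.stirlingFirst n (m + 1) / n.factorial) := by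
  have h := congrArg (Nat.cast : ℕ → K) (stirlingFirst_convolution n m)
  push_cast at h
  rw [← mul_div_assoc, ← h, sum_div]
  refine sum_congr rfl fun ij hij => ?_
  rw [HasAntidiagonal.mem_antidiagonal] at hij
  subst hij
  have : ((ij.1 + ij.2).factorial : K) ≠ 0 := mod_cast Nat.factorial_ne_zero _
  rw [Nat.cast_add_choose]
  field_simp

theorem sum_range_stirlingFirst_div_factorial (n m : ℕ) :
    ∑ i ∈ range (n + 1), (Nat.stirlingFirst i m / i.factorial : K) =
      Nat.stirlingFirst (n + 1) (m + 1) / n.factorial := by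
  induction n with
  | zero => simp [Nat.stirlingFirst_succ_succ]
  | succ n ih =>
    rw [sum_range_succ, ih, Nat.stirlingFirst_succ_succ (n + 1) m, Nat.factorial_succ]
    push_cast
    field_simp

-- At `n = 0` both sides are `0`, the right one because `(0 : K)⁻¹ = 0`.
theorem stirlingFirst_one_div_factorial (n : ℕ) :
    (Nat.stirlingFirst n 1 / n.factorial : K) = (n : K)⁻¹ := by
  cases n with
  | zero => simp
  | succ n =>
    have : (n.factorial : K) ≠ 0 := mod_cast n.factorial_ne_zero
    rw [Nat.stirlingFirst_one_right, Nat.factorial_succ]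
    push_cast
    field_simp

end Field

def HasAbsSum {ι E : Type*} [SeminormedAddCommGroup E] (f : ι → E) (s : E) : Prop :=
  HasSum f s ∧ Summable fun i => ‖f i‖

namespace HasAbsSum

variable {R : Type*} [NormedRing R] {f g : ℕ → R} {s t : R}

theorem const_mul (c : R) (hf : HasAbsSum f s) : HasAbsSum (fun n => c * f n) (c * s) :=
  ⟨hf.1.mul_left c, (hf.2.mul_left ‖c‖).of_nonneg_of_le (fun _ => norm_nonneg _)
    fun _ => norm_mul_le _ _⟩

theorem mul_antidiagonal [CompleteSpace R] (hf : HasAbsSum f s) (hg : HasAbsSum g t) :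
    HasAbsSum (fun n => ∑ kl ∈ antidiagonal n, f kl.1 * g kl.2) (s * t) := by
  have hfg := summable_norm_sum_mul_antidiagonal_of_summable_norm hf.2 hg.2
  refine ⟨?_, hfg⟩
  rw [← hf.1.tsum_eq, ← hg.1.tsum_eq,
    tsum_mul_tsum_eq_tsum_sum_antidiagonal_of_summable_norm hf.2 hg.2]
  exact hfg.of_norm.hasSum

theorem odd_part {a : ℕ → R} {z : R} (hs : HasAbsSum (fun n => a n * z ^ n) s)
    (ht : HasSum (fun n => a n * (-z) ^ n) t) :
    HasAbsSum (fun k => 2 * a (2 * k + 1) * z ^ (2 * k + 1)) (s - t) := by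
  have hodd : Function.Injective fun k : ℕ => 2 * k + 1 := fun _ _ h => by simpa using h
  have heven : ∀ n ∉ Set.range fun k : ℕ => 2 * k + 1, a n * z ^ n - a n * (-z) ^ n = 0 := by
    intro n hn
    have : Even n := Nat.not_odd_iff_even.mp fun ⟨k, hk⟩ => hn ⟨k, hk.symm⟩
    rw [this.neg_pow, sub_self]
  have hterm : ∀ k : ℕ, a (2 * k + 1) * z ^ (2 * k + 1) - a (2 * k + 1) * (-z) ^ (2 * k + 1) =
      2 * a (2 * k + 1) * z ^ (2 * k + 1) := fun k => by
    rw [(odd_two_mul_add_one k).neg_pow, mul_neg, sub_neg_eq_add, ← two_mul, mul_assoc]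
  refine ⟨?_, ?_⟩
  · simpa only [Function.comp_def, hterm] using (hodd.hasSum_iff heven).mpr (hs.1.sub ht)
  · refine ((hs.2.comp_injective hodd).mul_left ‖(2 : R)‖).of_nonneg_of_le
      (fun _ => norm_nonneg _) fun k => ?_
    dsimp only [Function.comp_apply]
    rw [mul_assoc]
    exact norm_mul_le _ _

end HasAbsSum

theorem HasAbsSum.mul_powerSeries {R : Type*} [NormedCommRing R] [CompleteSpace R]
    {a b : ℕ → R} {z s t : R} (ha : HasAbsSum (fun n => a n * z ^ n) s)
    (hb : HasAbsSum (fun n => b n * z ^ n) t) :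
    HasAbsSum (fun n => (∑ kl ∈ antidiagonal n, a kl.1 * b kl.2) * z ^ n) (s * t) := by
  convert ha.mul_antidiagonal hb using 2 with n
  rw [sum_mul]
  refine sum_congr rfl fun kl hkl => ?_
  rw [← HasAntidiagonal.mem_antidiagonal.mp hkl, pow_add]
  ring

theorem hasAbsSum_geometric {K : Type*} [NormedDivisionRing K] [CompleteSpace K] {ξ : K}
    (h : ‖ξ‖ < 1) : HasAbsSum (fun n => ξ ^ n) (1 - ξ)⁻¹ :=
  ⟨hasSum_geometric_of_norm_lt_one h, by
    simpa only [norm_pow] using summable_geometric_of_lt_one (norm_nonneg _) h⟩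

section Complex

variable {z : ℂ}

theorem hasAbsSum_stirlingFirst_one (hz : ‖z‖ < 1) :
    HasAbsSum (fun n => (Nat.stirlingFirst n 1 / n.factorial : ℂ) * z ^ n)
      (-Complex.log (1 - z)) := by
  simp only [stirlingFirst_one_div_factorial, inv_mul_eq_div]
  refine ⟨Complex.hasSum_taylorSeries_neg_log hz, ?_⟩
  refine (hasAbsSum_geometric hz).2.of_nonneg_of_le (fun _ => norm_nonneg _) fun n => ?_
  dsimp only
  rw [div_eq_mul_inv, norm_mul, norm_inv, Complex.norm_natCast]
  exact mul_le_of_le_one_right (norm_nonneg _) (Nat.cast_inv_le_one n)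

theorem hasAbsSum_stirlingFirst_div_factorial (m : ℕ) (hz : ‖z‖ < 1) :
    HasAbsSum (fun n => (Nat.stirlingFirst n m / n.factorial : ℂ) * z ^ n)
      ((-Complex.log (1 - z)) ^ m / m.factorial) := by
  induction m with
  | zero =>
    have hsingle : (fun n => (Nat.stirlingFirst n 0 / n.factorial : ℂ) * z ^ n) =
        Pi.single 0 1 := by
      funext n
      cases n <;> simp
    rw [hsingle]
    simp only [pow_zero, Nat.factorial_zero, Nat.cast_one, div_one]
    exact ⟨hasSum_pi_single 0 1, (hasSum_single 0 fun n hn => by simp [hn]).summable⟩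
  | succ m ih =>
    have hm : (m + 1 : ℂ) ≠ 0 := Nat.cast_add_one_ne_zero m
    convert ((ih.mul_powerSeries (hasAbsSum_stirlingFirst_one hz)).const_mul (m + 1 : ℂ)⁻¹)
      using 1
    · funext n
      rw [sum_antidiagonal_stirlingFirst_div_factorial, ← mul_assoc, inv_mul_cancel_left₀ hm]
    · rw [Nat.factorial_succ, pow_succ]
      push_cast
      field_simp

theorem hasAbsSum_stirlingFirst_succ_div_factorial (m : ℕ) (hz : ‖z‖ < 1) :
    HasAbsSum (fun n => (Nat.stirlingFirst (n + 1) (m + 1) / n.factorial : ℂ) * z ^ n)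
      ((-Complex.log (1 - z)) ^ m / m.factorial * (1 - z)⁻¹) := by
  have hgeom : HasAbsSum (fun n => (1 : ℂ) * z ^ n) (1 - z)⁻¹ := by
    simpa only [one_mul] using hasAbsSum_geometric hz
  convert (hasAbsSum_stirlingFirst_div_factorial m hz).mul_powerSeries hgeom using 3 with n
  simp only [Nat.sum_antidiagonal_eq_sum_range_succ_mk, mul_one]
  rw [sum_range_stirlingFirst_div_factorial]

theorem hasAbsSum_log_pow_div_one_sub (m : ℕ) (hz : ‖z‖ < 1) :
    HasAbsSum (fun n => (-1) ^ m * m.factorial *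
        (Nat.stirlingFirst (n + 1) (m + 1) / n.factorial : ℂ) * z ^ n)
      (Complex.log (1 - z) ^ m / (1 - z)) := by
  have hm : (m.factorial : ℂ) ≠ 0 := mod_cast m.factorial_ne_zero
  convert (hasAbsSum_stirlingFirst_succ_div_factorial m hz).const_mul ((-1 : ℂ) ^ m * m.factorial)
    using 1
  · simp only [mul_assoc]
  · field_simp
    rw [← mul_pow, neg_one_mul, neg_neg]

end Complex

/-- For every `m ≥ 0` and complex `|z| < 1`,
`ln^m(1−z)/(1−z) − ln^m(1+z)/(1+z) = 2(−1)^m m! Σ_{k≥0} (|S₁(2k+2,m+1)|/(2k+1)!) z^{2k+1}`,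
with the series converging absolutely. -/
theorem log_pow_odd_part_series (m : ℕ) (z : ℂ) (hz : ‖z‖ < 1) :
    HasSum (fun k : ℕ =>
        2 * (-1 : ℂ) ^ m * (Nat.factorial m : ℂ) *
          ((S1 (2 * k + 2) (m + 1) : ℂ) / (Nat.factorial (2 * k + 1) : ℂ)) *
            z ^ (2 * k + 1))
      ((Complex.log (1 - z)) ^ m / (1 - z) - (Complex.log (1 + z)) ^ m / (1 + z)) ∧
    Summable (fun k : ℕ =>
        ‖2 * (-1 : ℂ) ^ m * (Nat.factorial m : ℂ) *
          ((S1 (2 * k + 2) (m + 1) : ℂ) / (Nat.factorial (2 * k + 1) : ℂ)) *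
            z ^ (2 * k + 1)‖) := by
  have hminus := hasAbsSum_log_pow_div_one_sub m (z := -z) (by rwa [norm_neg])
  rw [sub_neg_eq_add] at hminus
  have hodd := (hasAbsSum_log_pow_div_one_sub m hz).odd_part hminus.1
  simp only [S1, coeff_ascPochhammer_nat]
  show HasAbsSum _ _
  convert hodd using 2 with k
  ring
end

section
/- For every fixed integer m ≥ 0, one has the asymptotics |S₁(2k+2, m+1)| / (2k+1)! ~ (ln^m k)/m! as k → ∞; that is, the ratio of the left-hand side to (ln^m k)/m! tends to 1 as k → ∞. -/
/-!
Since `z(z+1)⋯(z+N) = N! z ∏_{j ≤ N} (1 + z/j)`, the quotient `|S₁(N+1, m+1)|/N!` is the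
elementary symmetric function `e_m(1, 1/2, …, 1/N)`, and `a_m(N) = m! e_m` (`stirlingQuot N m`)
satisfies `a_{m+1}(N+1) - a_{m+1}(N) = (m+1) a_m(N)/(N+1)`. This is a discrete form of
`d(H^{m+1}) = (m+1) H^m dH` for the harmonic numbers `H_N`, so summing asymptotic equivalences
(Stolz–Cesàro) gives `a_m(N) ~ H_N^m` by induction on `m`. Finally `H_{2k+1} = log k + O(1)`.
-/

open Finset Filter Real

open Asymptotics
open scoped Nat

theorem S1_eq_stirlingFirst (n k : ℕ) : S1 n k = Nat.stirlingFirst n k := by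
  induction n generalizing k with
  | zero => cases k <;> simp [S1, Polynomial.coeff_one]
  | succ n ih =>
    cases k with
    | zero => simp [S1, Polynomial.coeff_zero_eq_eval_zero]
    | succ k =>
      rw [Nat.stirlingFirst_succ_succ, ← ih, ← ih, S1, ascPochhammer_succ_right, mul_add,
        Polynomial.coeff_add, Polynomial.coeff_mul_X, Polynomial.coeff_mul_natCast, Nat.cast_id,
        S1, S1]
      ring

noncomputable def stirlingQuot (N m : ℕ) : ℝ := m ! * S1 (N + 1) (m + 1) / N !

theorem stirlingQuot_zero_right (N : ℕ) : stirlingQuot N 0 = 1 := by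
  simp [stirlingQuot, S1_eq_stirlingFirst, Nat.stirlingFirst_one_right, Nat.factorial_ne_zero]

theorem stirlingQuot_succ_succ (N m : ℕ) :
    stirlingQuot (N + 1) (m + 1) =
      stirlingQuot N (m + 1) + (m + 1) / (N + 1) * stirlingQuot N m := by
  simp only [stirlingQuot, S1_eq_stirlingFirst, Nat.stirlingFirst_succ_succ (N + 1) (m + 1),
    Nat.factorial_succ]
  push_cast
  field_simp

theorem stirlingQuot_eq_sum (N m : ℕ) :
    stirlingQuot N (m + 1) = ∑ n ∈ range N, (m + 1) / (n + 1) * stirlingQuot n m := by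
  induction N with
  | zero => simp [stirlingQuot, S1_eq_stirlingFirst, Nat.stirlingFirst_eq_zero_of_lt]
  | succ N ih => rw [stirlingQuot_succ_succ, ih, sum_range_succ, add_comm]

theorem Asymptotics.IsEquivalent.sum_range {f g : ℕ → ℝ} (h : f ~[atTop] g) (hg : 0 ≤ g)
    (hsum : Tendsto (fun n => ∑ i ∈ range n, g i) atTop atTop) :
    (fun n => ∑ i ∈ range n, f i) ~[atTop] fun n => ∑ i ∈ range n, g i :=
  (h.isLittleO.sum_range hg hsum).congr_left fun n => by simp [sum_sub_distrib]

section PowDifference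

variable {R : Type*} [CommRing R] [LinearOrder R] [IsStrictOrderedRing R] {a b : R}

theorem mul_pow_le_pow_succ_sub_pow_succ (ha : 0 ≤ a) (hab : a ≤ b) (m : ℕ) :
    (m + 1) * (b - a) * a ^ m ≤ b ^ (m + 1) - a ^ (m + 1) := by
  have hself := geom_sum₂_self a (m + 1)
  rw [Nat.add_sub_cancel, Nat.cast_succ] at hself
  have hgeom := geom_sum₂_mul b a (m + 1)
  rw [Nat.add_sub_cancel] at hgeom
  rw [← hgeom, mul_right_comm, ← hself]
  gcongr with i

theorem pow_succ_sub_pow_succ_le (ha : 0 ≤ a) (hab : a ≤ b) (m : ℕ) :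
    b ^ (m + 1) - a ^ (m + 1) ≤ (m + 1) * (b - a) * b ^ m := by
  have := abs_pow_sub_pow_le b a (m + 1)
  rw [abs_of_nonneg (sub_nonneg.2 hab), abs_of_nonneg (ha.trans hab), abs_of_nonneg ha,
    max_eq_left hab, Nat.add_sub_cancel, Nat.cast_succ] at this
  exact (le_abs_self _).trans (this.trans_eq (by ring))

end PowDifference

theorem tendsto_harmonic_atTop : Tendsto (fun n : ℕ => (harmonic n : ℝ)) atTop atTop :=
  tendsto_atTop_mono log_add_one_le_harmonic
    (tendsto_log_atTop.comp (tendsto_natCast_atTop_atTop.comp (tendsto_add_atTop_nat 1)))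

theorem harmonic_succ_sub_harmonic (n : ℕ) :
    (harmonic (n + 1) : ℝ) - harmonic n = 1 / (n + 1) := by
  simp [harmonic_succ]

theorem harmonic_nonneg_real (n : ℕ) : 0 ≤ (harmonic n : ℝ) :=
  (log_nonneg (by simp)).trans (log_add_one_le_harmonic n)

theorem harmonic_le_harmonic_succ_real (n : ℕ) : (harmonic n : ℝ) ≤ harmonic (n + 1) := by
  rw [← sub_nonneg, harmonic_succ_sub_harmonic]
  positivity

theorem harmonic_pow_le_harmonic_succ_pow (n m : ℕ) :
    (harmonic n : ℝ) ^ m ≤ (harmonic (n + 1) : ℝ) ^ m :=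
  pow_le_pow_left₀ (harmonic_nonneg_real n) (harmonic_le_harmonic_succ_real n) m

theorem isEquivalent_harmonic_succ :
    (fun n : ℕ => (harmonic (n + 1) : ℝ)) ~[atTop] fun n => (harmonic n : ℝ) := by
  refine IsLittleO.isEquivalent ?_
  have hdiff : (fun n : ℕ => (harmonic (n + 1) : ℝ)) - (fun n => (harmonic n : ℝ)) =
      fun n : ℕ => 1 / ((n : ℝ) + 1) :=
    funext harmonic_succ_sub_harmonic
  rw [hdiff]
  exact (tendsto_one_div_add_atTop_nhds_zero_nat.isBigO_one ℝ).trans_isLittleO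
    ((isLittleO_one_left_iff ℝ).2 (tendsto_norm_atTop_atTop.comp tendsto_harmonic_atTop))

theorem isEquivalent_harmonic_pow_succ_sub (m : ℕ) :
    (fun n : ℕ => (harmonic (n + 1) : ℝ) ^ (m + 1) - (harmonic n : ℝ) ^ (m + 1)) ~[atTop]
      fun n => (m + 1) / (n + 1) * (harmonic n : ℝ) ^ m := by
  have herr : (fun n : ℕ => (m + 1) / (n + 1) * ((harmonic (n + 1) : ℝ) ^ m - harmonic n ^ m))
      =o[atTop] fun n => (m + 1) / (n + 1) * (harmonic n : ℝ) ^ m :=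
    (isBigO_refl _ _).mul_isLittleO (isEquivalent_harmonic_succ.pow m).isLittleO
  -- the increment lies between `(m+1)/(n+1) H_n^m` and `(m+1)/(n+1) H_{n+1}^m`
  refine IsLittleO.isEquivalent (IsBigO.trans_isLittleO (isBigO_of_le _ fun n => ?_) herr)
  have hlow := mul_pow_le_pow_succ_sub_pow_succ (harmonic_nonneg_real n)
    (harmonic_le_harmonic_succ_real n) m
  have hup := pow_succ_sub_pow_succ_le (harmonic_nonneg_real n)
    (harmonic_le_harmonic_succ_real n) m
  rw [harmonic_succ_sub_harmonic, mul_one_div] at hlow hup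
  rw [Real.norm_of_nonneg (by simp only [Pi.sub_apply]; linarith), Real.norm_of_nonneg]
  · simp only [Pi.sub_apply]
    linarith
  · exact mul_nonneg (by positivity) (sub_nonneg.2 (harmonic_pow_le_harmonic_succ_pow n m))

theorem stirlingQuot_isEquivalent_harmonic_pow (m : ℕ) :
    (fun N => stirlingQuot N m) ~[atTop] fun N => (harmonic N : ℝ) ^ m := by
  induction m with
  | zero =>
    simp only [stirlingQuot_zero_right, pow_zero]
    exact IsEquivalent.refl
  | succ m ih =>
    have hterm : (fun n : ℕ => (m + 1) / (n + 1) * stirlingQuot n m) ~[atTop]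
        fun n => (harmonic (n + 1) : ℝ) ^ (m + 1) - (harmonic n : ℝ) ^ (m + 1) :=
      (IsEquivalent.refl.mul ih).trans (isEquivalent_harmonic_pow_succ_sub m).symm
    have htel : ∀ N, ∑ n ∈ range N, ((harmonic (n + 1) : ℝ) ^ (m + 1) - harmonic n ^ (m + 1)) =
        (harmonic N : ℝ) ^ (m + 1) := fun N => by
      rw [sum_range_sub (fun n => (harmonic n : ℝ) ^ (m + 1))]
      simp
    have hsum := hterm.sum_range (fun n => sub_nonneg.2 (harmonic_pow_le_harmonic_succ_pow n _))
      (by simp only [htel]; exact (tendsto_pow_atTop m.succ_ne_zero).comp tendsto_harmonic_atTop)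
    simpa only [htel, ← stirlingQuot_eq_sum] using hsum

theorem tendsto_two_mul_add_one_atTop : Tendsto (fun k : ℕ => 2 * k + 1) atTop atTop :=
  tendsto_atTop_mono (fun k => show k ≤ 2 * k + 1 by omega) tendsto_id

theorem isEquivalent_harmonic_two_mul_add_one_log :
    (fun k : ℕ => (harmonic (2 * k + 1) : ℝ)) ~[atTop] fun k => log k := by
  have hsub : Tendsto (fun k : ℕ => (harmonic (2 * k + 1) : ℝ) - log ((2 * k + 1 : ℕ) : ℝ))
      atTop (nhds eulerMascheroniConstant) :=
    tendsto_harmonic_sub_log.comp tendsto_two_mul_add_one_atTop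
  have hratio : Tendsto (fun k : ℕ => log (2 + 1 / k)) atTop (nhds (log 2)) := by
    have h := ((tendsto_one_div_atTop_nhds_zero_nat (𝕜 := ℝ)).const_add 2).log (by norm_num)
    rwa [add_zero] at h
  have hbdd := (hsub.add hratio).isBigO_one ℝ
  refine IsLittleO.isEquivalent (IsBigO.trans_isLittleO (hbdd.congr' ?_ .rfl)
    (isLittleO_const_log_atTop.comp_tendsto tendsto_natCast_atTop_atTop))
  filter_upwards [eventually_ge_atTop 1] with k hk
  have hk0 : (0 : ℝ) < k := by exact_mod_cast hk
  rw [show (2 : ℝ) + 1 / k = ((2 * k + 1 : ℕ) : ℝ) / k by push_cast; field_simp,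
    log_div (by positivity) hk0.ne']
  simp only [Pi.sub_apply]
  ring

/-- For every fixed `m ≥ 0`, `|S₁(2k+2, m+1)|/(2k+1)! ~ ln^m k / m!` as `k → ∞`:
the ratio of the two sides tends to `1`. -/
theorem stirling_ratio_asymptotics (m : ℕ) :
    Tendsto (fun k : ℕ =>
        ((S1 (2 * k + 2) (m + 1) : ℝ) / (Nat.factorial (2 * k + 1) : ℝ)) /
          ((Real.log k) ^ m / (Nat.factorial m : ℝ)))
      atTop (nhds 1) := by
  have hequiv : (fun k : ℕ => stirlingQuot (2 * k + 1) m) ~[atTop] fun k => log k ^ m :=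
    ((stirlingQuot_isEquivalent_harmonic_pow m).comp_tendsto
      tendsto_two_mul_add_one_atTop).trans
      (isEquivalent_harmonic_two_mul_add_one_log.pow m)
  have hlog : ∀ᶠ k : ℕ in atTop, log k ^ m ≠ 0 := by
    filter_upwards [eventually_gt_atTop 1] with k hk
    exact pow_ne_zero _ (log_pos (by exact_mod_cast hk)).ne'
  refine ((isEquivalent_iff_tendsto_one hlog).1 hequiv).congr fun k => ?_
  simp only [Pi.div_apply, stirlingQuot, div_div_eq_mul_div]
  ring
end

section
/- For all integers n ≥ 0 and m ≥ 0, the n-th derivative of the function x ↦ (ln^m x)/x evaluated at x = 1 equals m! · S₁(n+1, m+1), where S₁ denotes the signed Stirling numbers of the first kind. -/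
open Finset Filter Real

/-- Signed Stirling numbers of the first kind: `S₁(n,l) = (−1)^{n+l} |S₁(n,l)|`. -/
noncomputable def S1signed (n l : ℕ) : ℤ := (-1) ^ (n + l) * (S1 n l : ℤ)

/-!
Since `d/dx (g / x^(k+1)) = (x g' - (k+1) g) / x^(k+2)` and `x d/dx` acts on polynomials in
`log x` as formal differentiation `D`, the `n`-th derivative of `P(log x) / x` is
`(q_n(D) P)(log x) / x^(n+1)` with `q_n = (X - 1)⋯(X - n)`. At `x = 1` only the constant
coefficient of `q_n(D) X^m` survives; as `D^i X^m` has constant coefficient `m!` for `i = m` and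
`0` otherwise, this is `m!` times the coefficient of `X^m` in `q_n`, that is, of `X^(m+1)` in
`X(X - 1)⋯(X - n)`, which is the signed Stirling number `S₁(n+1, m+1)`.
-/

open Polynomial

section CommRing

variable {R : Type*} [CommRing R]

theorem descPochhammer_eq_neg_one_pow_mul_ascPochhammer_comp (n : ℕ) :
    descPochhammer R n = (-1) ^ n * (ascPochhammer R n).comp (C (-1) * X) := by
  induction n with
  | zero => simp
  | succ n ih =>
    rw [descPochhammer_succ_right, ascPochhammer_succ_right, ih, mul_comp, add_comp, X_comp,
      natCast_comp, map_neg, map_one]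
    ring

theorem coeff_descPochhammer (n j : ℕ) :
    (descPochhammer R n).coeff j = (-1) ^ (n + j) * ((ascPochhammer ℕ n).coeff j : R) := by
  rw [descPochhammer_eq_neg_one_pow_mul_ascPochhammer_comp, ← C_1, ← C_neg, ← C_pow, coeff_C_mul,
    comp_C_mul_X_coeff, ← ascPochhammer_map (Nat.castRingHom R), coeff_map, eq_natCast, pow_add]
  ring

theorem X_mul_prod_range_X_sub_C_succ (n : ℕ) :
    X * ∏ k ∈ range n, (X - C (k + 1 : R)) = descPochhammer R (n + 1) := by
  induction n with
  | zero => simp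
  | succ n ih =>
    rw [prod_range_succ, ← mul_assoc, ih, descPochhammer_succ_right R (n + 1)]
    simp

theorem coeff_zero_iterate_derivative_X_pow (i m : ℕ) :
    (derivative^[i] (X ^ m : R[X])).coeff 0 = if i = m then (m.factorial : R) else 0 := by
  rw [coeff_iterate_derivative, zero_add, Nat.descFactorial_self, coeff_X_pow, nsmul_eq_mul]
  split_ifs <;> simp_all

theorem coeff_zero_aeval_derivative_X_pow (q : R[X]) (m : ℕ) :
    (aeval (derivative : Module.End R R[X]) q (X ^ m)).coeff 0 = m.factorial * q.coeff m := by
  induction q using Polynomial.induction_on' with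
  | add p q hp hq => simp [hp, hq, mul_add]
  | monomial i c =>
    simp [Module.End.pow_apply, coeff_zero_iterate_derivative_X_pow, coeff_monomial, mul_comm]

theorem aeval_derivative_X_sub_C_mul (a : R) (q P : R[X]) :
    aeval (derivative : Module.End R R[X]) ((X - C a) * q) P =
      derivative (aeval (derivative : Module.End R R[X]) q P) -
        a • aeval (derivative : Module.End R R[X]) q P := by
  simp

end CommRing

theorem hasDerivAt_eval_log_div_pow (P : ℝ[X]) (k : ℕ) {x : ℝ} (hx : x ≠ 0) :
    HasDerivAt (fun y => P.eval (log y) / y ^ (k + 1))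
      ((derivative P - (k + 1 : ℝ) • P).eval (log x) / x ^ (k + 2)) x := by
  have hnum := (P.hasDerivAt (log x)).comp x (hasDerivAt_log hx)
  refine (hnum.fun_div (hasDerivAt_pow (k + 1) x) (pow_ne_zero _ hx)).congr_deriv ?_
  simp only [Function.comp_apply, eval_sub, eval_smul, smul_eq_mul, Nat.cast_add, Nat.cast_one,
    add_tsub_cancel_right]
  field_simp
  ring

theorem iteratedDeriv_eval_log_div (P : ℝ[X]) (n : ℕ) {x : ℝ} (hx : x ≠ 0) :
    iteratedDeriv n (fun y => P.eval (log y) / y) x =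
      (aeval (derivative : Module.End ℝ ℝ[X]) (∏ k ∈ range n, (X - C (k + 1 : ℝ))) P).eval (log x)
        / x ^ (n + 1) := by
  induction n generalizing x with
  | zero => simp
  | succ n ih =>
    have hev : iteratedDeriv n (fun y => P.eval (log y) / y) =ᶠ[nhds x] fun y =>
        (aeval (derivative : Module.End ℝ ℝ[X]) (∏ k ∈ range n, (X - C (k + 1 : ℝ))) P).eval (log y)
          / y ^ (n + 1) :=
      eventually_of_mem (isOpen_ne.mem_nhds hx) fun y hy => ih hy
    rw [iteratedDeriv_succ, hev.deriv_eq, (hasDerivAt_eval_log_div_pow _ n hx).deriv,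
      prod_range_succ_comm, aeval_derivative_X_sub_C_mul]

/-- For all `n, m ≥ 0`, the `n`-th derivative of `x ↦ ln^m x / x` at `x = 1` equals
`m! · S₁(n+1, m+1)`. -/
theorem iteratedDeriv_log_pow_div_at_one (n m : ℕ) :
    iteratedDeriv n (fun x : ℝ => (Real.log x) ^ m / x) 1 =
      (Nat.factorial m : ℝ) * (S1signed (n + 1) (m + 1) : ℝ) := by
  have h := iteratedDeriv_eval_log_div (X ^ m) n one_ne_zero
  simp only [eval_pow, eval_X, log_one, one_pow, div_one] at h
  rw [h, ← coeff_zero_eq_eval_zero, coeff_zero_aeval_derivative_X_pow, ← coeff_X_mul,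
    X_mul_prod_range_X_sub_C_succ, coeff_descPochhammer, S1signed, S1]
  push_cast
  ring
end

section
/- For every integer N ≥ 1 there exists θ ∈ (0,1) (depending on N) such that Euler's constant satisfies γ = (1/2)·( 1 + Σ_{k=1}^{N} B_{2k}/k + θ · B_{2N+2}/(N+1) ). -/
/-!
Euler–Maclaurin summation of `1/u` on `[1, ∞)` gives
`γ = 1/2 + ∑_{k ≤ N} B_{2k}/(2k) - ∫₁^∞ B̃_{2N+1}(u) u^{-2N-2} du`, with `B̃ₘ` the `1`-periodic
Bernoulli function; each step is an integration by parts on every unit interval. One more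
integration by parts, against `B_{2N+2}(t) - B_{2N+2}`, which vanishes at `0` and `1` and by the
Fourier expansion of `B_{2N+2}` has the constant sign `(-1)^(N+1)` on `(0, 1)`, shows that the
remainder `R_N` after `N` terms has sign `(-1)^N`. As `R_N - R_{N+1} = B_{2N+2}/(2N+2)`, two
consecutive remainders of opposite signs force `R_N = θ B_{2N+2}/(2N+2)` with `0 < θ < 1`.
-/

open Finset Filter Real intervalIntegral Topology
open scoped Interval

/-- The piece over `[x, x + 1]` of `∫ B̃ₘ(u) / u ^ (m + 1) du`. -/
noncomputable def bernoulliIntegral (m : ℕ) (x : ℝ) : ℝ :=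
  ∫ t in (0 : ℝ)..1, bernoulliFun m t / (x + t) ^ (m + 1)

section
variable {x : ℝ}

lemma add_pos_of_mem_uIcc_zero_one (hx : 0 < x) {t : ℝ} (ht : t ∈ [[(0 : ℝ), 1]]) :
    0 < x + t := by
  rw [Set.uIcc_of_le zero_le_one] at ht
  linarith [ht.1]

lemma intervalIntegrable_div_add_pow (hx : 0 < x) {f : ℝ → ℝ} (hf : Continuous f) (p : ℕ) :
    IntervalIntegrable (fun t => f t / (x + t) ^ p) MeasureTheory.volume 0 1 :=
  ContinuousOn.intervalIntegrable <| hf.continuousOn.div (by fun_prop) fun t ht =>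
    pow_ne_zero _ (add_pos_of_mem_uIcc_zero_one hx ht).ne'

lemma integral_inv_add_pow_succ (hx : 0 < x) {q : ℕ} (hq : q ≠ 0) :
    ∫ t in (0 : ℝ)..1, ((x + t) ^ (q + 1))⁻¹ = ((x ^ q)⁻¹ - ((x + 1) ^ q)⁻¹) / q := by
  have hx1 : (0 : ℝ) ∉ [[x + 0, x + 1]] := by
    rw [Set.uIcc_of_le (by linarith)]; exact fun h => by linarith [h.1]
  have key := integral_zpow (n := -((q + 1 : ℕ) : ℤ)) (Or.inr ⟨by omega, hx1⟩)
  rw [← integral_comp_add_left (fun u : ℝ => u ^ (-((q + 1 : ℕ) : ℤ)))] at key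
  simp only [zpow_neg, zpow_natCast, add_zero] at key
  rw [key, show -((q + 1 : ℕ) : ℤ) + 1 = -(q : ℤ) by push_cast; ring]
  simp only [zpow_neg, zpow_natCast, Int.cast_neg, Int.cast_natCast]
  push_cast
  rw [show -((q : ℝ) + 1) + 1 = -q by ring, div_neg, ← neg_div, neg_sub]

lemma bernoulliIntegral_eq_integral_sub (hx : 0 < x) {m : ℕ} (hm : m ≠ 0) :
    bernoulliIntegral m x =
      ∫ t in (0 : ℝ)..1, (bernoulliFun (m + 1) t - bernoulli (m + 1)) / (x + t) ^ (m + 2) := by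
  -- an antiderivative of `Bₘ` vanishing at both endpoints, as `m + 1 ≠ 1`
  set u : ℝ → ℝ := fun t => (bernoulliFun (m + 1) t - bernoulli (m + 1)) / (m + 1)
  have hu : ∀ t ∈ [[(0 : ℝ), 1]], HasDerivAt u (bernoulliFun m t) t := fun t _ => by
    simpa [u, sub_div] using
      (antideriv_bernoulliFun m t).sub_const ((bernoulli (m + 1) : ℝ) / (m + 1))
  have hv : ∀ t ∈ [[(0 : ℝ), 1]], HasDerivAt (fun t => ((x + t) ^ (m + 1))⁻¹)
      (-(m + 1) / (x + t) ^ (m + 2)) t := by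
    intro t ht
    have hxt := (add_pos_of_mem_uIcc_zero_one hx ht).ne'
    refine (((hasDerivAt_id t).const_add x).pow (m + 1)).inv (pow_ne_zero _ hxt)
      |>.congr_deriv ?_
    simp only [Pi.pow_apply, id_eq, Nat.cast_add, Nat.cast_one, add_tsub_cancel_right]
    field_simp
    ring
  have hu_end : u 1 = 0 ∧ u 0 = 0 := by
    simp [u, bernoulliFun_endpoints_eq_of_ne_one (by omega : m + 1 ≠ 1), bernoulliFun_eval_zero]
  have ibp := integral_mul_deriv_eq_deriv_mul hu hv (intervalIntegrable_bernoulliFun m 0 1)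
    (intervalIntegrable_div_add_pow hx (f := fun _ => -((m : ℝ) + 1)) continuous_const _)
  simp only [hu_end, zero_mul, sub_zero, zero_sub] at ibp
  calc bernoulliIntegral m x
      = ∫ t in (0 : ℝ)..1, bernoulliFun m t * ((x + t) ^ (m + 1))⁻¹ := by
        simp only [bernoulliIntegral, div_eq_mul_inv]
    _ = -∫ t in (0 : ℝ)..1, u t * (-(m + 1) / (x + t) ^ (m + 2)) := by rw [ibp, neg_neg]
    _ = _ := by
        rw [← intervalIntegral.integral_neg]
        congr 1 with t
        simp only [u]
        field_simp

lemma bernoulliIntegral_eq_succ_sub (hx : 0 < x) {m : ℕ} (hm : m ≠ 0) :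
    bernoulliIntegral m x = bernoulliIntegral (m + 1) x -
      bernoulli (m + 1) / (m + 1) * ((x ^ (m + 1))⁻¹ - ((x + 1) ^ (m + 1))⁻¹) := by
  have hsplit : ∫ t in (0 : ℝ)..1, (bernoulliFun (m + 1) t - bernoulli (m + 1)) / (x + t) ^ (m + 2)
      = bernoulliIntegral (m + 1) x -
        bernoulli (m + 1) * ∫ t in (0 : ℝ)..1, ((x + t) ^ (m + 1 + 1))⁻¹ := by
    rw [bernoulliIntegral, ← intervalIntegral.integral_const_mul,
      ← intervalIntegral.integral_sub (intervalIntegrable_div_add_pow hx (by fun_prop) _)]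
    · congr 1 with t
      ring
    · simpa [div_eq_mul_inv] using
        (intervalIntegrable_div_add_pow hx (f := fun _ => 1) continuous_const _).const_mul
          (bernoulli (m + 1) : ℝ)
  rw [bernoulliIntegral_eq_integral_sub hx hm, hsplit, integral_inv_add_pow_succ hx (by omega)]
  push_cast
  ring

lemma abs_bernoulliIntegral_le (hx : 0 < x) {m : ℕ} {C : ℝ}
    (hC : ∀ t ∈ Set.Icc (0 : ℝ) 1, |bernoulliFun m t| ≤ C) :
    |bernoulliIntegral m x| ≤ C / x ^ (m + 1) := by
  have hbound :
      ∀ t ∈ Ι (0 : ℝ) 1, ‖bernoulliFun m t / (x + t) ^ (m + 1)‖ ≤ C / x ^ (m + 1) := by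
    intro t ht
    rw [Set.uIoc_of_le zero_le_one] at ht
    rw [Real.norm_eq_abs, abs_div, abs_pow, abs_of_pos (by linarith [ht.1] : 0 < x + t)]
    exact div_le_div₀ ((abs_nonneg _).trans (hC t (Set.Ioc_subset_Icc_self ht)))
      (hC t (Set.Ioc_subset_Icc_self ht)) (by positivity) (by gcongr; linarith [ht.1])
  simpa [bernoulliIntegral] using norm_integral_le_of_norm_le_const hbound

end

lemma summable_bernoulliIntegral {m : ℕ} (hm : m ≠ 0) :
    Summable fun n : ℕ => bernoulliIntegral m (n + 1) := by
  obtain ⟨C, hC⟩ := isCompact_Icc.exists_bound_of_continuousOn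
    (continuous_bernoulliFun m).continuousOn (s := Set.Icc (0 : ℝ) 1)
  have hsum : Summable fun n : ℕ => C * (((n : ℝ) + 1) ^ (m + 1))⁻¹ := by
    refine Summable.mul_left C ?_
    exact_mod_cast (summable_nat_add_iff 1).2 (summable_nat_pow_inv.2 (by omega))
  refine Summable.of_norm_bounded hsum fun n => ?_
  rw [← div_eq_mul_inv]
  exact abs_bernoulliIntegral_le n.cast_add_one_pos hC

lemma hasSum_sub_succ_of_antitone {f : ℕ → ℝ} {l : ℝ} (hf : Antitone f)
    (hl : Tendsto f atTop (𝓝 l)) : HasSum (fun n => f n - f (n + 1)) (f 0 - l) := by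
  refine (hasSum_iff_tendsto_nat_of_nonneg (fun n => sub_nonneg.2 (hf n.le_succ)) _).2 ?_
  simpa only [Finset.sum_range_sub'] using tendsto_const_nhds.sub hl

lemma hasSum_inv_pow_sub_inv_pow {q : ℕ} (hq : q ≠ 0) :
    HasSum (fun n : ℕ => (((n : ℝ) + 1) ^ q)⁻¹ - (((n : ℝ) + 2) ^ q)⁻¹) 1 := by
  have hf : Antitone fun n : ℕ => (((n : ℝ) + 1) ^ q)⁻¹ := fun a b hab =>
    inv_anti₀ (by positivity) (pow_le_pow_left₀ (by positivity) (by gcongr) q)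
  have hl : Tendsto (fun n : ℕ => (((n : ℝ) + 1) ^ q)⁻¹) atTop (𝓝 0) := by
    simpa [zero_pow hq, one_div, inv_pow] using
      (tendsto_one_div_add_atTop_nhds_zero_nat (𝕜 := ℝ)).pow q
  convert hasSum_sub_succ_of_antitone hf hl using 1
  · ext n; push_cast; ring_nf
  · simp

/-- `∫₁^∞ B̃ₘ(u) / u ^ (m + 1) du`. -/
noncomputable def bernoulliTail (m : ℕ) : ℝ := ∑' n : ℕ, bernoulliIntegral m (n + 1)

lemma bernoulliTail_eq_succ_sub {m : ℕ} (hm : m ≠ 0) :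
    bernoulliTail m = bernoulliTail (m + 1) - bernoulli (m + 1) / (m + 1) := by
  set c : ℝ := bernoulli (m + 1) / (m + 1)
  have h := (summable_bernoulliIntegral (m := m + 1) (by omega)).hasSum.sub
    ((hasSum_inv_pow_sub_inv_pow (q := m + 1) (by omega)).mul_left c)
  rw [mul_one] at h
  calc bernoulliTail m
      = ∑' n : ℕ, (bernoulliIntegral (m + 1) (n + 1) -
          c * ((((n : ℝ) + 1) ^ (m + 1))⁻¹ - (((n : ℝ) + 2) ^ (m + 1))⁻¹)) := by
        refine tsum_congr fun n => ?_
        rw [bernoulliIntegral_eq_succ_sub (Nat.cast_add_one_pos n) hm, add_assoc,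
          one_add_one_eq_two]
    _ = _ := h.tsum_eq

lemma bernoulliIntegral_one {x : ℝ} (hx : 0 < x) :
    bernoulliIntegral 1 x = log (x + 1) - log x - (x⁻¹ + (x + 1)⁻¹) / 2 := by
  have hF : ∀ t ∈ [[(0 : ℝ), 1]], HasDerivAt (fun t => log (x + t) + (x + 1 / 2) / (x + t))
      (bernoulliFun 1 t / (x + t) ^ (1 + 1)) t := by
    intro t ht
    have hxt := (add_pos_of_mem_uIcc_zero_one hx ht).ne'
    have hid := (hasDerivAt_id t).const_add x
    refine ((hid.log hxt).add ((hasDerivAt_const t (x + 1 / 2)).div hid hxt)).congr_deriv ?_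
    simp only [bernoulliFun_one, id]
    field_simp
    ring
  rw [bernoulliIntegral, integral_eq_sub_of_hasDerivAt hF
    (intervalIntegrable_div_add_pow hx (continuous_bernoulliFun 1) _), add_zero]
  field_simp
  ring

lemma bernoulliTail_one : bernoulliTail 1 = 1 / 2 - eulerMascheroniConstant := by
  have hpartial (n : ℕ) : ∑ i ∈ range n, bernoulliIntegral 1 (i + 1) =
      log (n + 1) - harmonic n + 1 / 2 - 1 / (n + 1) / 2 := by
    induction n with
    | zero => simp
    | succ n ih =>
      rw [sum_range_succ, ih, bernoulliIntegral_one n.cast_add_one_pos, harmonic_succ]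
      push_cast
      field_simp
      ring
  have hlim : Tendsto (fun n : ℕ => log (n + 1) - harmonic n + 1 / 2 - 1 / (n + 1) / 2) atTop
      (𝓝 (1 / 2 - eulerMascheroniConstant)) := by
    convert (tendsto_harmonic_sub_log_add_one.neg.const_add (1 / 2)).sub
      ((tendsto_one_div_add_atTop_nhds_zero_nat (𝕜 := ℝ)).div_const 2) using 2 with n <;> ring
  refine tendsto_nhds_unique ?_ (hlim.congr fun n => (hpartial n).symm)
  exact (summable_bernoulliIntegral one_ne_zero).hasSum.tendsto_sum_nat

lemma eulerMascheroniConstant_eq_sub_bernoulliTail (N : ℕ) :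
    eulerMascheroniConstant =
      1 / 2 * (1 + ∑ k ∈ Icc 1 N, (bernoulli (2 * k) : ℝ) / k) - bernoulliTail (2 * N + 1) := by
  induction N with
  | zero => simp [bernoulliTail_one]
  | succ N ih =>
    have hodd : bernoulli (2 * N + 1 + 1 + 1) = 0 :=
      bernoulli_eq_zero_of_odd ⟨N + 1, by ring⟩ (by omega)
    rw [sum_Icc_succ_top (by omega), ih, show 2 * (N + 1) + 1 = 2 * N + 1 + 1 + 1 by ring,
      show 2 * (N + 1) = 2 * N + 1 + 1 by ring, bernoulliTail_eq_succ_sub (by omega),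
      bernoulliTail_eq_succ_sub (m := 2 * N + 1 + 1) (by omega), hodd]
    push_cast
    field_simp
    ring

lemma neg_one_pow_mul_bernoulliFun_sub_pos {k : ℕ} (hk : k ≠ 0) {x : ℝ}
    (hx : x ∈ Set.Ioo 0 1) :
    0 < (-1) ^ k * (bernoulliFun (2 * k) x - bernoulli (2 * k)) := by
  have hcos : cos (2 * π * x) < 1 := by
    refine (cos_le_one _).lt_of_ne fun h => ?_
    rw [cos_eq_one_iff_of_lt_of_lt (by nlinarith [pi_pos, hx.1])
      (by nlinarith [pi_pos, hx.2])] at h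
    nlinarith [pi_pos, hx.1]
  -- compare the Fourier series of `B_{2k}` at `x` and at `0`: the `n = 1` terms differ strictly
  have hlt := hasSum_lt (i := 1) (fun n => mul_le_mul_of_nonneg_left
      ((cos_le_one _).trans_eq (by simp)) (by positivity))
    (by simpa using hcos) (hasSum_one_div_nat_pow_mul_cos hk ⟨hx.1.le, hx.2.le⟩)
    (hasSum_one_div_nat_pow_mul_cos hk ⟨le_rfl, zero_le_one⟩)
  change _ * bernoulliFun (2 * k) x < _ * bernoulliFun (2 * k) 0 at hlt
  rw [bernoulliFun_eval_zero] at hlt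
  have hE : 0 < (2 * π) ^ (2 * k) / 2 / ((2 * k).factorial : ℝ) := by positivity
  refine pos_of_mul_pos_right ?_ hE.le
  rw [pow_succ] at hlt
  linear_combination hlt

lemma neg_one_pow_mul_bernoulliIntegral_pos {x : ℝ} (hx : 0 < x) (N : ℕ) :
    0 < (-1) ^ (N + 1) * bernoulliIntegral (2 * N + 1) x := by
  rw [bernoulliIntegral_eq_integral_sub hx (by omega), ← intervalIntegral.integral_const_mul]
  refine intervalIntegral_pos_of_pos_on
    ((intervalIntegrable_div_add_pow hx (by fun_prop) _).const_mul _) (fun t ht => ?_) zero_lt_one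
  rw [← mul_div_assoc, show 2 * N + 1 + 1 = 2 * (N + 1) by ring]
  exact div_pos (neg_one_pow_mul_bernoulliFun_sub_pos N.succ_ne_zero ht)
    (pow_pos (by linarith [ht.1]) _)

lemma neg_one_pow_mul_bernoulliTail_pos (N : ℕ) :
    0 < (-1) ^ (N + 1) * bernoulliTail (2 * N + 1) := by
  rw [bernoulliTail, ← tsum_mul_left]
  exact ((summable_bernoulliIntegral (by omega)).mul_left _).tsum_pos
    (fun n => (neg_one_pow_mul_bernoulliIntegral_pos n.cast_add_one_pos N).le) 0
    (neg_one_pow_mul_bernoulliIntegral_pos (Nat.cast_add_one_pos 0) N)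

lemma bernoulliTail_mul_bernoulliTail_neg (N : ℕ) :
    bernoulliTail (2 * N + 1) * bernoulliTail (2 * (N + 1) + 1) < 0 := by
  have hsign := mul_pos (neg_one_pow_mul_bernoulliTail_pos N)
    (neg_one_pow_mul_bernoulliTail_pos (N + 1))
  have hodd : (-1 : ℝ) ^ (N + 1) * (-1) ^ (N + 1 + 1) = -1 := by
    rw [← pow_add]
    exact Odd.neg_one_pow ⟨N + 1, by ring⟩
  linear_combination hsign + bernoulliTail (2 * N + 1) * bernoulliTail (2 * (N + 1) + 1) * hodd

lemma exists_mem_Ioo_eq_mul_of_pos_mul_sub {r c : ℝ} (h : 0 < r * (c - r)) :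
    ∃ θ ∈ Set.Ioo (0 : ℝ) 1, r = θ * c := by
  have hc : c ≠ 0 := by rintro rfl; nlinarith [sq_nonneg r]
  have hθ : 0 < r / c * (1 - r / c) := by
    rw [show r / c * (1 - r / c) = r * (c - r) / c ^ 2 by field_simp]
    positivity
  refine ⟨r / c, ⟨?_, ?_⟩, (div_mul_cancel₀ r hc).symm⟩ <;> nlinarith

theorem euler_constant_enveloping_series_general (N : ℕ) :
    ∃ θ : ℝ, θ ∈ Set.Ioo (0 : ℝ) 1 ∧
      Real.eulerMascheroniConstant =
        (1 / 2) * (1 + (∑ k ∈ Finset.Icc 1 N, ((bernoulli (2 * k) : ℚ) : ℝ) / k) +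
          θ * ((bernoulli (2 * N + 2) : ℚ) : ℝ) / (N + 1)) := by
  have hγ := eulerMascheroniConstant_eq_sub_bernoulliTail N
  have hγ' := eulerMascheroniConstant_eq_sub_bernoulliTail (N + 1)
  have halt := bernoulliTail_mul_bernoulliTail_neg N
  rw [sum_Icc_succ_top (by omega), Nat.cast_succ] at hγ'
  rw [show 2 * (N + 1) = 2 * N + 2 by ring] at hγ' halt
  obtain ⟨θ, hθ, hr⟩ := exists_mem_Ioo_eq_mul_of_pos_mul_sub
    (r := -bernoulliTail (2 * N + 1)) (c := bernoulli (2 * N + 2) / (N + 1) / 2)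
    (by linear_combination halt + bernoulliTail (2 * N + 1) * (hγ - hγ'))
  exact ⟨θ, hθ, by linear_combination hγ + hr⟩

/-- Stirling-type semi-convergent series for Euler's constant: for every `N ≥ 1`
there is `θ ∈ (0,1)` with `γ = (1/2)(1 + Σ_{k=1}^N B_{2k}/k + θ B_{2N+2}/(N+1))`. -/
theorem euler_constant_enveloping_series (N : ℕ) (hN : 1 ≤ N) :
    ∃ θ : ℝ, θ ∈ Set.Ioo (0 : ℝ) 1 ∧
      Real.eulerMascheroniConstant =
        (1 / 2) * (1 + (∑ k ∈ Finset.Icc 1 N, ((bernoulli (2 * k) : ℚ) : ℝ) / k) +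
          θ * ((bernoulli (2 * N + 2) : ℚ) : ℝ) / (N + 1)) :=
  euler_constant_enveloping_series_general N
end
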